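/- arXiv:2412.11200 — 5 statements merged into one kernel-verified Lean document; each statement's English description precedes it below -/
import Mathlib

section
/- Let D = {(0,0), (1,0), (0,1), (-1,-1)} ⊂ ℤ² and define the mask polynomial m_D(ξ) = (1/4)·∑_{d∈D} e^{2πi⟨d,ξ⟩} for ξ ∈ ℝ². Then the zero set of m_D is exactly (1/2)·{(ℓ₁,ℓ₂) : ℓ₁,ℓ₂ ∈ {0,1}, (ℓ₁,ℓ₂) ≠ (0,0)} + ℤ². -/
/-!
Write `u = e^{2πiξ₁}` and `v = e^{2πiξ₂}`, so that `4 m_D(ξ) = 1 + u + v + (uv)⁻¹`. Since `u` and `v`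
lie on the unit circle, a zero of this expression is also a zero of its complex conjugate
`1 + u⁻¹ + v⁻¹ + uv`; clearing denominators and subtracting the two equations leaves
`(u - 1)(v - 1)(uv - 1) = 0`. Each factor, fed back into the first equation, forces the remaining
unknowns to be `-1`, so `(u, v)` is one of `(-1, 1)`, `(1, -1)`, `(-1, -1)`, and conversely these
are zeros. Finally `e^{2πit} = 1` iff `t ∈ ℤ` and `e^{2πit} = -1` iff `t ∈ 1/2 + ℤ`.
-/

open Complex

/-- The mask polynomial of a finite digit set `D ⊂ ℝ²`:
`m_D(ξ) = (1/#D) ∑_{d ∈ D} e^{2πi⟨d,ξ⟩}`. -/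
noncomputable def maskD (D : Finset (ℝ × ℝ)) (ξ : ℝ × ℝ) : ℂ :=
  (D.card : ℂ)⁻¹ * ∑ d ∈ D,
    Complex.exp (2 * (Real.pi : ℂ) * Complex.I * ((d.1 * ξ.1 + d.2 * ξ.2 : ℝ) : ℂ))

open ComplexConjugate Real

theorem Complex.one_add_add_add_mul_inv_eq_zero_iff {u v : ℂ} (hu : ‖u‖ = 1) (hv : ‖v‖ = 1) :
    1 + u + v + (u * v)⁻¹ = 0 ↔ (u = -1 ∧ v = 1) ∨ (u = 1 ∧ v = -1) ∨ (u = -1 ∧ v = -1) := by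
  have hu0 : u ≠ 0 := norm_ne_zero_iff.mp (by simp [hu])
  have hv0 : v ≠ 0 := norm_ne_zero_iff.mp (by simp [hv])
  have eq_neg_one {z : ℂ} (hz : (z + 1) ^ 2 = 0) : z = -1 :=
    eq_neg_of_add_eq_zero_left (pow_eq_zero_iff two_ne_zero |>.mp hz)
  constructor
  · intro h
    have hconj : 1 + u⁻¹ + v⁻¹ + v * u = 0 := by
      simpa [inv_eq_conj hu, inv_eq_conj hv] using congrArg conj h
    field_simp at h hconj
    have hfactor : (u - 1) * (v - 1) * (u * v - 1) = 0 := by linear_combination hconj - h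
    rcases mul_eq_zero.mp hfactor with huv | huv
    rcases mul_eq_zero.mp huv with hu1 | hv1
    · obtain rfl := sub_eq_zero.mp hu1
      exact Or.inr <| Or.inl ⟨rfl, eq_neg_one (by linear_combination h)⟩
    · obtain rfl := sub_eq_zero.mp hv1
      exact Or.inl ⟨eq_neg_one (by linear_combination h), rfl⟩
    · have hsum : u + v + 2 = 0 := by linear_combination h - (1 + u + v) * huv
      obtain rfl := eq_neg_one (by linear_combination u * hsum - huv)
      exact Or.inr <| Or.inr ⟨rfl, by linear_combination hsum⟩
  · rintro (⟨rfl, rfl⟩ | ⟨rfl, rfl⟩ | ⟨rfl, rfl⟩) <;> norm_num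

theorem Complex.norm_exp_two_pi_mul_I_mul (x : ℝ) : ‖exp (2 * π * I * x)‖ = 1 := by
  rw [norm_exp]
  simp

theorem Complex.exp_two_pi_mul_I_mul_eq_one_iff (x : ℝ) :
    exp (2 * π * I * x) = 1 ↔ ∃ n : ℤ, x = n := by
  rw [Complex.exp_eq_one_iff]
  refine exists_congr fun n => ?_
  rw [mul_comm _ (2 * π * I : ℂ), mul_right_inj' (by simp [pi_ne_zero])]
  exact_mod_cast Iff.rfl

theorem Complex.exp_two_pi_mul_I_mul_eq_neg_one_iff (x : ℝ) :
    exp (2 * π * I * x) = -1 ↔ ∃ n : ℤ, x = 1 / 2 + n := by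
  have hshift : exp (2 * π * I * x) = exp (2 * π * I * ↑(x - 1 / 2)) * exp (π * I) := by
    rw [← Complex.exp_add]
    push_cast
    ring_nf
  rw [hshift, exp_pi_mul_I, mul_neg_one, neg_inj, exp_two_pi_mul_I_mul_eq_one_iff]
  simp only [sub_eq_iff_eq_add']

theorem maskD_eq (x y : ℝ) :
    maskD {(0, 0), (1, 0), (0, 1), (-1, -1)} (x, y) =
      4⁻¹ * (1 + exp (2 * π * I * x) + exp (2 * π * I * y) +
        (exp (2 * π * I * x) * exp (2 * π * I * y))⁻¹) := by
  have hlast : exp (2 * π * I * (-x + -y)) = (exp (2 * π * I * x) * exp (2 * π * I * y))⁻¹ := by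
    rw [← Complex.exp_add, ← Complex.exp_neg]
    ring_nf
  simp [maskD, Finset.sum_insert, Finset.card_insert_of_notMem, Prod.ext_iff, hlast]
  ring

/-- for `D = {(0,0),(1,0),(0,1),(-1,-1)}`, the zero set of `m_D` is
exactly `(1/2)·{(1,0),(0,1),(1,1)} + ℤ²`. -/
theorem stmt_0 :
    {ξ : ℝ × ℝ |
        maskD ({((0:ℝ),(0:ℝ)), (1,0), (0,1), (-1,-1)} : Finset (ℝ × ℝ)) ξ = 0}
      = {ξ : ℝ × ℝ | ∃ l ∈ ({((1:ℝ),(0:ℝ)), (0,1), (1,1)} : Set (ℝ × ℝ)),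
          ∃ k : ℤ × ℤ, ξ = ((1/2) * l.1 + (k.1 : ℝ), (1/2) * l.2 + (k.2 : ℝ))} := by
  ext ⟨x, y⟩
  rw [Set.mem_ofPred_eq, maskD_eq, mul_eq_zero, inv_eq_zero, or_iff_right (by norm_num),
    one_add_add_add_mul_inv_eq_zero_iff (norm_exp_two_pi_mul_I_mul x)
      (norm_exp_two_pi_mul_I_mul y)]
  simp [exp_two_pi_mul_I_mul_eq_one_iff, exp_two_pi_mul_I_mul_eq_neg_one_iff, Prod.ext_iff,
    or_and_right, exists_or]
end

section
/- Let p_{i,j} > 0 with ∑_{j=1}^{n} p_{i,j} = 1 for each i, and let q_{i,j} ≥ 0 with ∑_{i=1}^{m} max_{1≤j≤n} q_{i,j} ≤ 1. Then ∑_{i=1}^{m} ∑_{j=1}^{n} p_{i,j} q_{i,j} = 1 if and only if for each i the values q_{i,1} = q_{i,2} = ⋯ = q_{i,n} are all equal, and ∑_{i=1}^{m} q_{i,1} = 1. -/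
/-! Each row sum `∑ⱼ p i j * q i j` is a convex combination of the `q i j`, hence at most the row
maximum `M i`, and `∑ᵢ M i ≤ 1`. So the total is `1` exactly when every row sum equals its row
maximum and `∑ᵢ M i = 1`; as all weights `p i j` are positive, a row sum equals the row maximum
only when the whole row is constant. -/

namespace Finset

variable {ι R : Type*} [Semiring R] {s : Finset ι} {w f : ι → R} {M : R}

theorem sum_mul_le_of_sum_eq_one [PartialOrder R] [IsOrderedRing R] (hw : ∀ j ∈ s, 0 ≤ w j)
    (hw₁ : ∑ j ∈ s, w j = 1) (hf : ∀ j ∈ s, f j ≤ M) : ∑ j ∈ s, w j * f j ≤ M :=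
  calc ∑ j ∈ s, w j * f j ≤ ∑ j ∈ s, w j * M :=
        sum_le_sum fun j hj => mul_le_mul_of_nonneg_left (hf j hj) (hw j hj)
    _ = M := by rw [← sum_mul, hw₁, one_mul]

theorem sum_mul_eq_iff_of_sum_eq_one [LinearOrder R] [IsStrictOrderedRing R]
    (hw : ∀ j ∈ s, 0 < w j) (hw₁ : ∑ j ∈ s, w j = 1) (hf : ∀ j ∈ s, f j ≤ M) :
    ∑ j ∈ s, w j * f j = M ↔ ∀ j ∈ s, f j = M := by
  have hle : ∀ j ∈ s, w j * f j ≤ w j * M :=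
    fun j hj => mul_le_mul_of_nonneg_left (hf j hj) (hw j hj).le
  conv_lhs => rw [← one_mul M, ← hw₁, sum_mul, sum_eq_sum_iff_of_le hle]
  exact forall₂_congr fun j hj => (strictMono_mul_left_of_pos (hw j hj)).injective.eq_iff

end Finset

open Finset

theorem stmt_3_general (m n : ℕ) (hn : 0 < n)
    (p q : Fin m → Fin n → ℝ)
    (hp : ∀ i j, 0 < p i j) (hpsum : ∀ i, ∑ j, p i j = 1)
    (hqmax : ∑ i, Finset.univ.sup' ⟨⟨0, hn⟩, Finset.mem_univ _⟩ (q i) ≤ 1) :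
    (∑ i, ∑ j, p i j * q i j = 1) ↔
      ((∀ i, ∀ j j' : Fin n, q i j = q i j') ∧ ∑ i, q i ⟨0, hn⟩ = 1) := by
  set M : Fin m → ℝ := fun i => univ.sup' ⟨⟨0, hn⟩, mem_univ _⟩ (q i)
  have hqM i j : q i j ≤ M i := le_sup' (q i) (mem_univ j)
  have hrow i : ∑ j, p i j * q i j ≤ M i :=
    sum_mul_le_of_sum_eq_one (fun j _ => (hp i j).le) (hpsum i) fun j _ => hqM i j
  have hrow_eq i : ∑ j, p i j * q i j = M i ↔ ∀ j, q i j = M i := by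
    simpa using sum_mul_eq_iff_of_sum_eq_one (fun j _ => hp i j) (hpsum i) fun j _ => hqM i j
  constructor
  · intro h
    have htotal : ∑ i, ∑ j, p i j * q i j = ∑ i, M i :=
      le_antisymm (sum_le_sum fun i _ => hrow i) (h ▸ hqmax)
    have hconst i j : q i j = M i :=
      (hrow_eq i).1 ((sum_eq_sum_iff_of_le fun i _ => hrow i).1 htotal i (mem_univ i)) j
    refine ⟨fun i j j' => (hconst i j).trans (hconst i j').symm, ?_⟩
    rw [← h, htotal]
    exact sum_congr rfl fun i _ => hconst i _
  · rintro ⟨hconst, hsum⟩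
    rw [← hsum]
    refine sum_congr rfl fun i _ => ?_
    simp_rw [hconst i _ ⟨0, hn⟩, ← sum_mul, hpsum i, one_mul]

/-- Deng–Li lemma: if `p_{i,j} > 0` with `∑_j p_{i,j} = 1` for each `i`,
and `q_{i,j} ≥ 0` with `∑_i max_j q_{i,j} ≤ 1`, then `∑_i ∑_j p_{i,j} q_{i,j} = 1`
iff for each `i` all the `q_{i,j}` are equal and `∑_i q_{i,1} = 1`. -/
theorem stmt_3 (m n : ℕ) (hm : 0 < m) (hn : 0 < n)
    (p q : Fin m → Fin n → ℝ)
    (hp : ∀ i j, 0 < p i j) (hpsum : ∀ i, ∑ j, p i j = 1)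
    (hq : ∀ i j, 0 ≤ q i j)
    (hqmax : ∑ i, Finset.univ.sup' ⟨⟨0, hn⟩, Finset.mem_univ _⟩ (q i) ≤ 1) :
    (∑ i, ∑ j, p i j * q i j = 1) ↔
      ((∀ i, ∀ j j' : Fin n, q i j = q i j') ∧ ∑ i, q i ⟨0, hn⟩ = 1) :=
  stmt_3_general m n hn p q hp hpsum hqmax
end

section
/- Let t ≥ 3 be odd and j₀ ≥ 1 an integer. For every ξ₀ ∈ (1/t)ℤ² \ ℤ², there exists k₀ ∈ ℤ² such that ξ₀ + k₀ ∈ (1/t)·2^{j₀−1}·(ℤ² \ 2ℤ²). -/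
/-! Write `ξ = v / t` and `N = j₀ - 1`. Since `t` is odd it is a unit modulo `2 ^ (N + 1)`, so
`v + t ℤ²` meets every residue class mod `2 ^ (N + 1)`; in particular it contains a point
`≡ (2 ^ N, 0)`, and such a point is `2 ^ N w` with `w₁` odd. -/

theorem IsCoprime.exists_add_mul_eq_add_mul {R : Type*} [CommRing R] {t m : R}
    (h : IsCoprime t m) (a b : R) : ∃ k q : R, a + t * k = b + m * q := by
  obtain ⟨u, c, huc⟩ := h
  exact ⟨u * (b - a), c * (a - b), by linear_combination (b - a) * huc⟩

theorem Odd.exists_add_mul_eq_two_pow_mul {t : ℤ} (ht : Odd t) (N : ℕ) (a r : ℤ) :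
    ∃ k q : ℤ, a + t * k = 2 ^ N * (r + 2 * q) := by
  have hcop : IsCoprime t (2 ^ (N + 1)) := (Int.isCoprime_two_right.2 ht).pow_right
  obtain ⟨k, q, h⟩ := hcop.exists_add_mul_eq_add_mul a (2 ^ N * r)
  exact ⟨k, q, by rw [h]; ring⟩

theorem stmt_9_general (t : ℤ) (hodd : Odd t) (j₀ : ℕ)
    (ξ : ℝ × ℝ)
    (hξ1 : ∃ v : ℤ × ℤ, ξ = ((v.1 : ℝ) / (t : ℝ), (v.2 : ℝ) / (t : ℝ))) :
    ∃ k₀ : ℤ × ℤ, ∃ w : ℤ × ℤ, (Odd w.1 ∨ Odd w.2) ∧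
      ξ + ((k₀.1 : ℝ), (k₀.2 : ℝ))
        = (((2 ^ (j₀ - 1) * w.1 : ℤ) : ℝ) / (t : ℝ),
           ((2 ^ (j₀ - 1) * w.2 : ℤ) : ℝ) / (t : ℝ)) := by
  obtain ⟨v, rfl⟩ := hξ1
  obtain ⟨k₁, q₁, h₁⟩ := hodd.exists_add_mul_eq_two_pow_mul (j₀ - 1) v.1 1
  obtain ⟨k₂, q₂, h₂⟩ := hodd.exists_add_mul_eq_two_pow_mul (j₀ - 1) v.2 0
  have ht : (t : ℝ) ≠ 0 := Int.cast_ne_zero.2 (by rintro rfl; simp at hodd)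
  refine ⟨(k₁, k₂), (1 + 2 * q₁, 0 + 2 * q₂), Or.inl (odd_one.add_even (even_two_mul q₁)), ?_⟩
  rw [← h₁, ← h₂, Prod.mk_add_mk]
  ext <;> push_cast <;> field_simp

/-- for odd `t ≥ 3`, `j₀ ≥ 1`, and `ξ₀ ∈ (1/t)ℤ² \ ℤ²`, there exists
`k₀ ∈ ℤ²` with `ξ₀ + k₀ ∈ (1/t)·2^{j₀−1}·(ℤ² \ 2ℤ²)`. -/
theorem stmt_9 (t : ℤ) (ht : 3 ≤ t) (hodd : Odd t) (j₀ : ℕ) (hj₀ : 1 ≤ j₀)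
    (ξ : ℝ × ℝ)
    (hξ1 : ∃ v : ℤ × ℤ, ξ = ((v.1 : ℝ) / (t : ℝ), (v.2 : ℝ) / (t : ℝ)))
    (hξ2 : ¬ ∃ k : ℤ × ℤ, ξ = ((k.1 : ℝ), (k.2 : ℝ))) :
    ∃ k₀ : ℤ × ℤ, ∃ w : ℤ × ℤ, (Odd w.1 ∨ Odd w.2) ∧
      ξ + ((k₀.1 : ℝ), (k₀.2 : ℝ))
        = (((2 ^ (j₀ - 1) * w.1 : ℤ) : ℝ) / (t : ℝ),
           ((2 ^ (j₀ - 1) * w.2 : ℤ) : ℝ) / (t : ℝ)) :=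
  stmt_9_general t hodd j₀ ξ hξ1
end

section
/- Let t₁, t₂ be odd integers and p = lcm(t₁,t₂). Suppose (t₁/t₂)ℤ² = ⋃_{s∈𝔽_p} ((s + p·l_s)/(2p) + Λ_s) where for each s ≠ 0, l_s ∈ {0,1}² is chosen with s + p·l_s ∉ 2ℤ², l_0 = 0, and each Λ_s ⊆ ℤ² (possibly empty). Then Λ_s = ∅ for all s ≠ 0, and (t₁/t₂)ℤ² = Λ_0 ⊆ ℤ²; in particular t₂ divides t₁. -/
/-- let `t₁, t₂` be odd integers, `p = lcm(t₁,t₂)`. Suppose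
`(t₁/t₂)ℤ² = ⋃_{s∈𝔽_p} ((s + p·l_s)/(2p) + Λ_s)` where `l_0 = 0`, for `s ≠ 0` the
choice `l_s ∈ {0,1}²` makes `s + p·l_s ∉ 2ℤ²`, and `Λ_s ⊆ ℤ²`. Then `Λ_s = ∅` for
all `s ≠ 0`, `(t₁/t₂)ℤ² = Λ_0 ⊆ ℤ²`, and in particular `t₂ ∣ t₁`. -/
theorem stmt_17 (t₁ t₂ : ℤ) (h₁ : Odd t₁) (h₂ : Odd t₂)
    (p : ℤ) (hp : p = Int.lcm t₁ t₂)
    (l : ℤ × ℤ → ℤ × ℤ) (Λ : ℤ × ℤ → Set (ℤ × ℤ))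
    (hl : ∀ s, (l s).1 ∈ ({0, 1} : Set ℤ) ∧ (l s).2 ∈ ({0, 1} : Set ℤ))
    (hl0 : l (0, 0) = (0, 0))
    (hlodd : ∀ s : ℤ × ℤ, (0 ≤ s.1 ∧ s.1 < p ∧ 0 ≤ s.2 ∧ s.2 < p) → s ≠ (0, 0) →
      ¬ ((2 ∣ s.1 + p * (l s).1) ∧ (2 ∣ s.2 + p * (l s).2)))
    (hset : {x : ℝ × ℝ | ∃ k : ℤ × ℤ,
          x = ((t₁ : ℝ) / (t₂ : ℝ) * (k.1 : ℝ), (t₁ : ℝ) / (t₂ : ℝ) * (k.2 : ℝ))}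
        = ⋃ s ∈ {s : ℤ × ℤ | 0 ≤ s.1 ∧ s.1 < p ∧ 0 ≤ s.2 ∧ s.2 < p},
            (fun γ : ℤ × ℤ =>
              (((s.1 + p * (l s).1 : ℤ) : ℝ) / (2 * (p : ℝ)) + (γ.1 : ℝ),
               ((s.2 + p * (l s).2 : ℤ) : ℝ) / (2 * (p : ℝ)) + (γ.2 : ℝ))) '' (Λ s)) :
    (∀ s : ℤ × ℤ, (0 ≤ s.1 ∧ s.1 < p ∧ 0 ≤ s.2 ∧ s.2 < p) → s ≠ (0, 0) → Λ s = ∅) ∧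
    ({x : ℝ × ℝ | ∃ k : ℤ × ℤ,
        x = ((t₁ : ℝ) / (t₂ : ℝ) * (k.1 : ℝ), (t₁ : ℝ) / (t₂ : ℝ) * (k.2 : ℝ))}
      = (fun γ : ℤ × ℤ => ((γ.1 : ℝ), (γ.2 : ℝ))) '' (Λ (0, 0))) ∧
    t₂ ∣ t₁ := by
  have ht1 : t₁ ≠ 0 := by rintro rfl; simp [Int.odd_iff] at h₁
  have ht2 : t₂ ≠ 0 := by rintro rfl; simp [Int.odd_iff] at h₂
  have hp0 : 0 < p := by
    rw [hp]
    exact_mod_cast Nat.pos_of_ne_zero (by simpa using Int.lcm_ne_zero ht1 ht2)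
  have hpR : (p : ℝ) ≠ 0 := Int.cast_ne_zero.2 hp0.ne'
  have ht2R : (t₂ : ℝ) ≠ 0 := Int.cast_ne_zero.2 ht2
  obtain ⟨m, hm⟩ : t₂ ∣ p := hp ▸ Int.dvd_lcm_right t₁ t₂
  have hmR : (p : ℝ) = (t₂ : ℝ) * (m : ℝ) := by exact_mod_cast hm
  have hpRpos : (0 : ℝ) < (p : ℝ) := by exact_mod_cast hp0
  have h2p : (2 * (p : ℝ)) ≠ 0 := by positivity
  have hl0' : l 0 = 0 := hl0
  have hlA : (l 0).1 = 0 := by rw [hl0']; rfl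
  have hlB : (l 0).2 = 0 := by rw [hl0']; rfl
  -- key step: Λ s = ∅ for s ≠ 0
  have key : ∀ s : ℤ × ℤ, (0 ≤ s.1 ∧ s.1 < p ∧ 0 ≤ s.2 ∧ s.2 < p) → s ≠ (0, 0) →
      Λ s = ∅ := by
    intro s hs hs0
    by_contra hne
    obtain ⟨γ, hγ⟩ := Set.nonempty_iff_ne_empty.2 hne
    have hx : (((s.1 + p * (l s).1 : ℤ) : ℝ) / (2 * (p : ℝ)) + (γ.1 : ℝ),
               ((s.2 + p * (l s).2 : ℤ) : ℝ) / (2 * (p : ℝ)) + (γ.2 : ℝ))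
        ∈ {x : ℝ × ℝ | ∃ k : ℤ × ℤ,
          x = ((t₁ : ℝ) / (t₂ : ℝ) * (k.1 : ℝ), (t₁ : ℝ) / (t₂ : ℝ) * (k.2 : ℝ))} := by
      rw [hset]
      exact Set.mem_biUnion hs ⟨γ, hγ, rfl⟩
    obtain ⟨k, hk⟩ := hx
    have hk1 : ((s.1 + p * (l s).1 : ℤ) : ℝ) / (2 * (p : ℝ)) + (γ.1 : ℝ)
        = (t₁ : ℝ) / (t₂ : ℝ) * (k.1 : ℝ) := congrArg Prod.fst hk
    have hk2 : ((s.2 + p * (l s).2 : ℤ) : ℝ) / (2 * (p : ℝ)) + (γ.2 : ℝ)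
        = (t₁ : ℝ) / (t₂ : ℝ) * (k.2 : ℝ) := congrArg Prod.snd hk
    have e1 : s.1 + p * (l s).1 + 2 * p * γ.1 = 2 * m * t₁ * k.1 := by
      have hA : ((s.1 + p * (l s).1 : ℤ) : ℝ) + 2 * (p : ℝ) * (γ.1 : ℝ)
          = 2 * (m : ℝ) * (t₁ : ℝ) * (k.1 : ℝ) := by
        calc ((s.1 + p * (l s).1 : ℤ) : ℝ) + 2 * (p : ℝ) * (γ.1 : ℝ)
            = 2 * (p : ℝ) * (((s.1 + p * (l s).1 : ℤ) : ℝ) / (2 * (p : ℝ)) + (γ.1 : ℝ)) := by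
              field_simp
          _ = 2 * (p : ℝ) * ((t₁ : ℝ) / (t₂ : ℝ) * (k.1 : ℝ)) := by rw [hk1]
          _ = 2 * (m : ℝ) * (t₁ : ℝ) * (k.1 : ℝ) := by rw [hmR]; field_simp
      exact_mod_cast hA
    have e2 : s.2 + p * (l s).2 + 2 * p * γ.2 = 2 * m * t₁ * k.2 := by
      have hA : ((s.2 + p * (l s).2 : ℤ) : ℝ) + 2 * (p : ℝ) * (γ.2 : ℝ)
          = 2 * (m : ℝ) * (t₁ : ℝ) * (k.2 : ℝ) := by
        calc ((s.2 + p * (l s).2 : ℤ) : ℝ) + 2 * (p : ℝ) * (γ.2 : ℝ)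
            = 2 * (p : ℝ) * (((s.2 + p * (l s).2 : ℤ) : ℝ) / (2 * (p : ℝ)) + (γ.2 : ℝ)) := by
              field_simp
          _ = 2 * (p : ℝ) * ((t₁ : ℝ) / (t₂ : ℝ) * (k.2 : ℝ)) := by rw [hk2]
          _ = 2 * (m : ℝ) * (t₁ : ℝ) * (k.2 : ℝ) := by rw [hmR]; field_simp
      exact_mod_cast hA
    exact hlodd s hs hs0
      ⟨⟨m * t₁ * k.1 - p * γ.1, by linarith⟩, ⟨m * t₁ * k.2 - p * γ.2, by linarith⟩⟩
  have h00 : ((0, 0) : ℤ × ℤ) ∈ {s : ℤ × ℤ | 0 ≤ s.1 ∧ s.1 < p ∧ 0 ≤ s.2 ∧ s.2 < p} :=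
    ⟨le_refl 0, hp0, le_refl 0, hp0⟩
  have himg : {x : ℝ × ℝ | ∃ k : ℤ × ℤ,
        x = ((t₁ : ℝ) / (t₂ : ℝ) * (k.1 : ℝ), (t₁ : ℝ) / (t₂ : ℝ) * (k.2 : ℝ))}
      = (fun γ : ℤ × ℤ => ((γ.1 : ℝ), (γ.2 : ℝ))) '' (Λ (0, 0)) := by
    rw [hset]
    ext x
    simp only [Set.mem_iUnion, Set.mem_setOf_eq, exists_prop]
    constructor
    · rintro ⟨s, hs, hxs⟩
      by_cases h : s = (0, 0)
      · subst h
        obtain ⟨γ, hγ, rfl⟩ := hxs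
        exact ⟨γ, hγ, by simp [hl0', hlA, hlB] <;> tauto⟩
      · rw [key s hs h] at hxs
        simp at hxs
    · rintro ⟨γ, hγ, rfl⟩
      exact ⟨(0, 0), h00, ⟨γ, hγ, by simp [hl0', hlA, hlB] <;> tauto⟩⟩
  refine ⟨key, himg, ?_⟩
  have hmem : ((t₁ : ℝ) / (t₂ : ℝ) * ((1 : ℤ) : ℝ), (t₁ : ℝ) / (t₂ : ℝ) * ((1 : ℤ) : ℝ))
      ∈ {x : ℝ × ℝ | ∃ k : ℤ × ℤ,
        x = ((t₁ : ℝ) / (t₂ : ℝ) * (k.1 : ℝ), (t₁ : ℝ) / (t₂ : ℝ) * (k.2 : ℝ))} :=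
    ⟨(1, 1), rfl⟩
  rw [himg] at hmem
  obtain ⟨γ, -, hγ⟩ := hmem
  have h1 : (γ.1 : ℝ) = (t₁ : ℝ) / (t₂ : ℝ) := by
    have := congrArg Prod.fst hγ
    simpa using this
  refine ⟨γ.1, ?_⟩
  have : (t₁ : ℝ) = (t₂ : ℝ) * (γ.1 : ℝ) := by
    field_simp at h1
    linarith
  exact_mod_cast this
end

section
/- Let M = 12·I on ℝ² and D = 𝒟 + 6𝒟 where 𝒟 = {(0,0),(1,0),(0,1),(-1,-1)}. Then with L = (1/4)M*·𝔽₄ = 3·𝔽₄ ⊂ ℤ² (where 𝔽₄ = {0,1,2,3}²), the triple (M, D, L) is a Hadamard triple; in particular (1/4)𝔽̊₄ ⊂ Z(m_D) = ((1/2)𝔽̊₂ + ℤ²) ∪ (1/6)((1/2)𝔽̊₂ + ℤ²). -/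
open Complex

/-- `𝒟 = {(0,0),(1,0),(0,1),(-1,-1)}`. -/
noncomputable def scrD : Finset (ℝ × ℝ) := {((0:ℝ),(0:ℝ)), (1,0), (0,1), (-1,-1)}

/-- `D = 𝒟 + 6𝒟 = {d + 6d' : d, d' ∈ 𝒟}` (16 elements). -/
noncomputable def Dbig : Finset (ℝ × ℝ) :=
  (scrD ×ˢ scrD).image (fun q => (q.1.1 + 6 * q.2.1, q.1.2 + 6 * q.2.2))

/-- `L = 3·𝔽₄` where `𝔽₄ = {0,1,2,3}²`. -/
noncomputable def Lbig : Finset (ℝ × ℝ) :=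
  (({0, 1, 2, 3} : Finset ℝ) ×ˢ ({0, 1, 2, 3} : Finset ℝ)).image
    (fun q => (3 * q.1, 3 * q.2))

/-- `(1/2)𝔽̊₂ + ℤ²`, the zero set of `m_𝒟`. -/
def halfLattice : Set (ℝ × ℝ) :=
  {x : ℝ × ℝ | ∃ l ∈ ({((1:ℝ),(0:ℝ)), (0,1), (1,1)} : Set (ℝ × ℝ)),
    ∃ k : ℤ × ℤ, x = (l.1 / 2 + (k.1 : ℝ), l.2 / 2 + (k.2 : ℝ))}

/-! ### Auxiliary: the exponential `e(x) = exp(2πix)` -/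

noncomputable def E (x : ℝ) : ℂ := Complex.exp (2 * (Real.pi : ℂ) * Complex.I * (x : ℂ))

lemma E_add (x y : ℝ) : E (x + y) = E x * E y := by
  rw [E, E, E, ← Complex.exp_add]; congr 1; push_cast; ring

lemma E_zero : E 0 = 1 := by simp [E]

lemma two_pi_I_ne : (2 * (Real.pi:ℂ) * Complex.I) ≠ 0 := by
  simp [Real.pi_ne_zero, Complex.I_ne_zero]

lemma E_eq_one_iff (x : ℝ) : E x = 1 ↔ ∃ k : ℤ, x = k := by
  rw [E, Complex.exp_eq_one_iff]
  constructor
  · rintro ⟨n, hn⟩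
    refine ⟨n, ?_⟩
    have h : ((x:ℂ) - n) * (2 * (Real.pi:ℂ) * Complex.I) = 0 := by linear_combination hn
    rcases mul_eq_zero.1 h with h | h
    · exact_mod_cast sub_eq_zero.1 h
    · exact absurd h two_pi_I_ne
  · rintro ⟨k, rfl⟩; exact ⟨k, by push_cast; ring⟩

lemma E_half : E (1/2) = -1 := by
  rw [E, ← Complex.exp_pi_mul_I]; congr 1; push_cast; ring

lemma E_eq_neg_one_iff (x : ℝ) : E x = -1 ↔ ∃ k : ℤ, x = 1/2 + k := by
  have h : E x = E (x - 1/2) * E (1/2) := by rw [← E_add]; congr 1; ring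
  rw [E_half, mul_neg_one] at h
  constructor
  · intro h'
    have h1 : E (x - 1/2) = 1 := by rw [h] at h'; linear_combination -h'
    obtain ⟨k, hk⟩ := (E_eq_one_iff _).1 h1
    exact ⟨k, by linarith⟩
  · rintro ⟨k, rfl⟩
    have h1 : E (1/2 + k - 1/2) = 1 := (E_eq_one_iff _).2 ⟨k, by ring⟩
    rw [h, h1]

lemma E_conj (x : ℝ) : (starRingEnd ℂ) (E x) = E (-x) := by
  rw [E, E, ← Complex.exp_conj]; congr 1
  simp only [map_mul, Complex.conj_I, Complex.conj_ofReal, map_ofNat]; push_cast; ring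

lemma E_mul_conj (x : ℝ) : E x * (starRingEnd ℂ) (E x) = 1 := by
  rw [E_conj, ← E_add]; simp [E_zero]

/-! ### The key algebraic lemma on the unit circle -/

lemma unit_zero (a b : ℂ) (ha : a * (starRingEnd ℂ) a = 1) (hb : b * (starRingEnd ℂ) b = 1)
    (h : 1 + a + b + (starRingEnd ℂ) a * (starRingEnd ℂ) b = 0) :
    (a = -1 ∧ b = -1) ∨ (a = -1 ∧ b = 1) ∨ (a = 1 ∧ b = -1) := by
  obtain ⟨A, hA⟩ : ∃ A, (starRingEnd ℂ) a = A := ⟨_, rfl⟩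
  obtain ⟨B, hB⟩ : ∃ B, (starRingEnd ℂ) b = B := ⟨_, rfl⟩
  have hA' : (starRingEnd ℂ) A = a := by rw [← hA, Complex.conj_conj]
  have hB' : (starRingEnd ℂ) B = b := by rw [← hB, Complex.conj_conj]
  rw [hA] at ha h
  rw [hB] at hb h
  have h' : 1 + A + B + a * b = 0 := by
    have := congrArg (starRingEnd ℂ) h
    simp only [map_add, map_mul, map_one, map_zero, hA, hB, hA', hB'] at this
    linear_combination this
  have key : (a + A + 2) * (b + B + 2) = 0 := by
    linear_combination (2 + A + B) * h + (1 - A * B) * h' + (b * B - 1) * ha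
  rcases mul_eq_zero.1 key with hk | hk
  · have ha1 : a = -1 := by
      have hsq : (a + 1) ^ 2 = 0 := by linear_combination a * hk - ha
      have h1 : a + 1 = 0 := pow_eq_zero_iff (n := 2) (by norm_num) |>.1 hsq
      linear_combination h1
    have hA1 : A = -1 := by linear_combination hk - ha1
    have hbB : b = B := by linear_combination h - ha1 - B * hA1
    have hb2 : (b - 1) * (b + 1) = 0 := by linear_combination hb + b * hbB
    rcases mul_eq_zero.1 hb2 with h2 | h2
    · exact Or.inr (Or.inl ⟨ha1, by linear_combination h2⟩)
    · exact Or.inl ⟨ha1, by linear_combination h2⟩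
  · have hb1 : b = -1 := by
      have hsq : (b + 1) ^ 2 = 0 := by linear_combination b * hk - hb
      have h1 : b + 1 = 0 := pow_eq_zero_iff (n := 2) (by norm_num) |>.1 hsq
      linear_combination h1
    have hB1 : B = -1 := by linear_combination hk - hb1
    have haA : a = A := by linear_combination h - hb1 - A * hB1
    have ha2 : (a - 1) * (a + 1) = 0 := by linear_combination ha + a * haA
    rcases mul_eq_zero.1 ha2 with h2 | h2
    · exact Or.inr (Or.inr ⟨by linear_combination h2, hb1⟩)
    · exact Or.inl ⟨by linear_combination h2, hb1⟩

/-! ### Structure of `scrD` and `Dbig` -/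

lemma scrD_card : scrD.card = 4 := by
  rw [scrD]
  rw [Finset.card_insert_of_notMem (by norm_num [Prod.ext_iff]),
      Finset.card_insert_of_notMem (by norm_num [Prod.ext_iff]),
      Finset.card_insert_of_notMem (by norm_num [Prod.ext_iff])]
  rfl

lemma mask_scrD (x y : ℝ) :
    maskD scrD (x, y) = (1 + E x + E y + E (-x - y)) / 4 := by
  rw [maskD, scrD_card]
  rw [show scrD = insert ((0:ℝ),(0:ℝ)) (insert (1,0) (insert (0,1) {(-1,-1)})) from rfl]
  rw [Finset.sum_insert (by norm_num [Prod.ext_iff]),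
      Finset.sum_insert (by norm_num [Prod.ext_iff]),
      Finset.sum_insert (by norm_num [Prod.ext_iff]), Finset.sum_singleton]
  simp only [E]
  norm_num
  ring_nf

lemma Dbig_inj : Set.InjOn (fun q : (ℝ×ℝ)×(ℝ×ℝ) => ((q.1.1 + 6 * q.2.1, q.1.2 + 6 * q.2.2) : ℝ×ℝ))
    ((scrD ×ˢ scrD) : Finset ((ℝ×ℝ)×(ℝ×ℝ))) := by
  rintro ⟨⟨x1,x2⟩,⟨x3,x4⟩⟩ hq ⟨⟨y1,y2⟩,⟨y3,y4⟩⟩ hr h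
  simp only [Finset.coe_product, Set.mem_prod, Finset.mem_coe, scrD, Finset.mem_insert,
    Finset.mem_singleton, Prod.ext_iff] at hq hr
  simp only [Prod.ext_iff] at h ⊢
  obtain ⟨hq1, hq2⟩ := hq
  obtain ⟨hr1, hr2⟩ := hr
  rcases hq1 with ⟨h1,h1'⟩|⟨h1,h1'⟩|⟨h1,h1'⟩|⟨h1,h1'⟩ <;>
  rcases hq2 with ⟨h2,h2'⟩|⟨h2,h2'⟩|⟨h2,h2'⟩|⟨h2,h2'⟩ <;>
  rcases hr1 with ⟨h3,h3'⟩|⟨h3,h3'⟩|⟨h3,h3'⟩|⟨h3,h3'⟩ <;>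
  rcases hr2 with ⟨h4,h4'⟩|⟨h4,h4'⟩|⟨h4,h4'⟩|⟨h4,h4'⟩ <;>
  subst_vars <;> norm_num at h <;> norm_num

lemma Dbig_card : Dbig.card = 16 := by
  rw [Dbig, Finset.card_image_of_injOn Dbig_inj, Finset.card_product, scrD_card]

lemma mask_split (x y : ℝ) :
    maskD Dbig (x, y) = maskD scrD (x, y) * maskD scrD (6*x, 6*y) := by
  rw [maskD, maskD, maskD, Dbig_card, scrD_card, Dbig,
    Finset.sum_image (fun p hp q hq h => Dbig_inj hp hq h)]
  rw [Finset.sum_product]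
  have key : ∀ p ∈ scrD, ∀ q ∈ scrD,
      E ((p.1 + 6*q.1) * x + (p.2 + 6*q.2) * y) = E (p.1*x + p.2*y) * E (q.1*(6*x) + q.2*(6*y)) := by
    intro p _ q _
    rw [← E_add]; congr 1; ring
  calc ((16:ℕ):ℂ)⁻¹ * ∑ p ∈ scrD, ∑ q ∈ scrD,
        Complex.exp (2 * (Real.pi : ℂ) * Complex.I * (((p.1+6*q.1) * x + (p.2+6*q.2) * y : ℝ) : ℂ))
      = ((16:ℕ):ℂ)⁻¹ * ∑ p ∈ scrD, ∑ q ∈ scrD, E (p.1*x + p.2*y) * E (q.1*(6*x) + q.2*(6*y)) := by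
        congr 1
        exact Finset.sum_congr rfl (fun p hp => Finset.sum_congr rfl (fun q hq => key p hp q hq))
    _ = ((4:ℕ):ℂ)⁻¹ * (∑ p ∈ scrD, E (p.1*x + p.2*y)) *
          (((4:ℕ):ℂ)⁻¹ * ∑ q ∈ scrD, E (q.1*(6*x) + q.2*(6*y))) := by
        rw [← Finset.sum_mul_sum]; push_cast; ring
    _ = _ := rfl

/-! ### The zero set of `m_𝒟` -/

lemma mem_halfLattice_iff (x y : ℝ) : (x, y) ∈ halfLattice ↔
    ((∃ k : ℤ, x = 1/2 + k) ∧ (∃ k : ℤ, y = 1/2 + k)) ∨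
    ((∃ k : ℤ, x = 1/2 + k) ∧ (∃ k : ℤ, y = (k:ℝ))) ∨
    ((∃ k : ℤ, x = (k:ℝ)) ∧ (∃ k : ℤ, y = 1/2 + k)) := by
  constructor
  · rintro ⟨l, hl, k, hk⟩
    simp only [Set.mem_insert_iff, Set.mem_singleton_iff] at hl
    rw [Prod.ext_iff] at hk
    obtain ⟨hk1, hk2⟩ := hk
    rcases hl with rfl | rfl | rfl
    · exact Or.inr (Or.inl ⟨⟨k.1, by simpa using hk1⟩, ⟨k.2, by simpa using hk2⟩⟩)
    · exact Or.inr (Or.inr ⟨⟨k.1, by simpa using hk1⟩, ⟨k.2, by simpa using hk2⟩⟩)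
    · exact Or.inl ⟨⟨k.1, by simpa using hk1⟩, ⟨k.2, by simpa using hk2⟩⟩
  · rintro (⟨⟨k1, rfl⟩, ⟨k2, rfl⟩⟩ | ⟨⟨k1, rfl⟩, ⟨k2, rfl⟩⟩ | ⟨⟨k1, rfl⟩, ⟨k2, rfl⟩⟩)
    · exact ⟨(1,1), by simp, (k1, k2), by norm_num⟩
    · exact ⟨(1,0), by simp, (k1, k2), by norm_num⟩
    · exact ⟨(0,1), by simp, (k1, k2), by norm_num⟩

lemma mask_scrD_zero_iff (x y : ℝ) : maskD scrD (x, y) = 0 ↔ (x, y) ∈ halfLattice := by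
  have hsub : E (-x - y) = (starRingEnd ℂ) (E x) * (starRingEnd ℂ) (E y) := by
    rw [E_conj, E_conj, ← E_add, show -x + -y = -x - y from by ring]
  rw [mask_scrD, div_eq_zero_iff]
  rw [mem_halfLattice_iff]
  constructor
  · rintro (h0 | h0)
    · rw [hsub] at h0
      rcases unit_zero _ _ (E_mul_conj x) (E_mul_conj y) h0 with ⟨hx, hy⟩ | ⟨hx, hy⟩ | ⟨hx, hy⟩
      · exact Or.inl ⟨(E_eq_neg_one_iff x).1 hx, (E_eq_neg_one_iff y).1 hy⟩
      · exact Or.inr (Or.inl ⟨(E_eq_neg_one_iff x).1 hx, (E_eq_one_iff y).1 hy⟩)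
      · exact Or.inr (Or.inr ⟨(E_eq_one_iff x).1 hx, (E_eq_neg_one_iff y).1 hy⟩)
    · norm_num at h0
  · intro h
    left
    rw [hsub]
    rcases h with ⟨hx, hy⟩ | ⟨hx, hy⟩ | ⟨hx, hy⟩
    · rw [(E_eq_neg_one_iff x).2 hx, (E_eq_neg_one_iff y).2 hy]; simp
    · rw [(E_eq_neg_one_iff x).2 hx, (E_eq_one_iff y).2 hy]; simp
    · rw [(E_eq_one_iff x).2 hx, (E_eq_neg_one_iff y).2 hy]; simp

lemma half_mem (u v : ℤ) (h : ¬(Even u ∧ Even v)) : ((u:ℝ)/2, (v:ℝ)/2) ∈ halfLattice := by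
  rw [mem_halfLattice_iff]
  rcases Int.even_or_odd u with ⟨m, hm⟩ | ⟨m, hm⟩ <;>
    rcases Int.even_or_odd v with ⟨n, hn⟩ | ⟨n, hn⟩
  · exact absurd ⟨⟨m, hm⟩, ⟨n, hn⟩⟩ h
  · exact Or.inr (Or.inr ⟨⟨m, by rw [hm]; push_cast; ring⟩, ⟨n, by rw [hn]; push_cast; ring⟩⟩)
  · exact Or.inr (Or.inl ⟨⟨m, by rw [hm]; push_cast; ring⟩, ⟨n, by rw [hn]; push_cast; ring⟩⟩)
  · exact Or.inl ⟨⟨m, by rw [hm]; push_cast; ring⟩, ⟨n, by rw [hn]; push_cast; ring⟩⟩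

/-! ### The key vanishing lemma -/

lemma key_vanish (s t : ℤ) (hs1 : -3 ≤ s) (hs2 : s ≤ 3) (ht1 : -3 ≤ t) (ht2 : t ≤ 3)
    (h : ¬(s = 0 ∧ t = 0)) : maskD Dbig ((s:ℝ)/4, (t:ℝ)/4) = 0 := by
  rw [mask_split]
  by_cases hp : Even s ∧ Even t
  · obtain ⟨⟨u, hu⟩, ⟨v, hv⟩⟩ := hp
    apply mul_eq_zero_of_left
    have hs : (s:ℝ) = u + u := by exact_mod_cast congrArg (Int.cast : ℤ → ℝ) hu
    have ht : (t:ℝ) = v + v := by exact_mod_cast congrArg (Int.cast : ℤ → ℝ) hv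
    rw [show ((s:ℝ)/4, (t:ℝ)/4) = ((u:ℝ)/2, (v:ℝ)/2) by
      rw [Prod.mk.injEq]; constructor <;> [rw [hs]; rw [ht]] <;> ring]
    refine (mask_scrD_zero_iff _ _).2 (half_mem u v ?_)
    rintro ⟨⟨a, ha⟩, ⟨b, hb⟩⟩
    exact h ⟨by omega, by omega⟩
  · apply mul_eq_zero_of_right
    rw [show ((6:ℝ)*((s:ℝ)/4), (6:ℝ)*((t:ℝ)/4)) = (((3*s:ℤ):ℝ)/2, ((3*t:ℤ):ℝ)/2) by
      rw [Prod.mk.injEq]; constructor <;> push_cast <;> ring]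
    refine (mask_scrD_zero_iff _ _).2 (half_mem (3*s) (3*t) ?_)
    rintro ⟨⟨a, ha⟩, ⟨b, hb⟩⟩
    exact hp ⟨⟨2*s - a, by omega⟩, ⟨2*t - b, by omega⟩⟩

lemma mask_Dbig_zero : maskD Dbig (0, 0) = 1 := by
  rw [mask_split, show ((6:ℝ)*0, (6:ℝ)*0) = ((0:ℝ), (0:ℝ)) by norm_num, mask_scrD,
    show (-(0:ℝ) - 0) = 0 by ring, E_zero]
  norm_num

lemma sum_mask (x y : ℝ) :
    ∑ d ∈ Dbig, E (d.1 * x + d.2 * y) = 16 * maskD Dbig (x, y) := by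
  rw [maskD, Dbig_card, ← mul_assoc,
    show (16:ℂ) * ((16:ℕ):ℂ)⁻¹ = 1 by norm_num, one_mul]
  rfl

lemma mem_L_struct (p : ℝ × ℝ) (hp : p ∈ Lbig) :
    ∃ a b : ℤ, 0 ≤ a ∧ a ≤ 3 ∧ 0 ≤ b ∧ b ≤ 3 ∧ p = (3*(a:ℝ), 3*(b:ℝ)) := by
  simp only [Lbig, Finset.mem_image, Finset.mem_product, Finset.mem_insert,
    Finset.mem_singleton] at hp
  obtain ⟨⟨u, v⟩, ⟨hu, hv⟩, rfl⟩ := hp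
  have h1 : ∃ a : ℤ, 0 ≤ a ∧ a ≤ 3 ∧ u = (a:ℝ) := by
    rcases hu with rfl | rfl | rfl | rfl
    exacts [⟨0, by norm_num⟩, ⟨1, by norm_num⟩, ⟨2, by norm_num⟩, ⟨3, by norm_num⟩]
  have h2 : ∃ b : ℤ, 0 ≤ b ∧ b ≤ 3 ∧ v = (b:ℝ) := by
    rcases hv with rfl | rfl | rfl | rfl
    exacts [⟨0, by norm_num⟩, ⟨1, by norm_num⟩, ⟨2, by norm_num⟩, ⟨3, by norm_num⟩]
  obtain ⟨a, ha1, ha2, rfl⟩ := h1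
  obtain ⟨b, hb1, hb2, rfl⟩ := h2
  exact ⟨a, b, ha1, ha2, hb1, hb2, rfl⟩

/-- with `M = 12I`, `D = 𝒟 + 6𝒟` and `L = 3𝔽₄`, the triple `(M,D,L)`
is a Hadamard triple (the normalized `16×16` exponential matrix is unitary, stated
via orthonormality of its columns); in particular
`(1/4)𝔽̊₄ ⊂ Z(m_D) = ((1/2)𝔽̊₂ + ℤ²) ∪ (1/6)((1/2)𝔽̊₂ + ℤ²)`. -/
theorem stmt_19 :
    (∀ l₁ ∈ Lbig, ∀ l₂ ∈ Lbig,
      ∑ d ∈ Dbig,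
          (starRingEnd ℂ) ((1/4 : ℂ) * Complex.exp (2 * (Real.pi : ℂ) * Complex.I *
              (((d.1 * l₁.1 + d.2 * l₁.2) / 12 : ℝ) : ℂ))) *
            ((1/4 : ℂ) * Complex.exp (2 * (Real.pi : ℂ) * Complex.I *
              (((d.1 * l₂.1 + d.2 * l₂.2) / 12 : ℝ) : ℂ)))
        = if l₁ = l₂ then 1 else 0) ∧
    {x : ℝ × ℝ | ∃ a b : ℤ, 0 ≤ a ∧ a ≤ 3 ∧ 0 ≤ b ∧ b ≤ 3 ∧ (a, b) ≠ (0, 0) ∧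
        x = ((a : ℝ) / 4, (b : ℝ) / 4)}
      ⊆ {ξ : ℝ × ℝ | maskD Dbig ξ = 0} ∧
    {ξ : ℝ × ℝ | maskD Dbig ξ = 0}
      = halfLattice ∪ {x : ℝ × ℝ | (6 * x.1, 6 * x.2) ∈ halfLattice} := by
  refine ⟨?_, ?_, ?_⟩
  · -- Hadamard orthogonality
    intro l₁ h₁ l₂ h₂
    obtain ⟨a₁, b₁, ha₁, ha₁', hb₁, hb₁', rfl⟩ := mem_L_struct l₁ h₁
    obtain ⟨a₂, b₂, ha₂, ha₂', hb₂, hb₂', rfl⟩ := mem_L_struct l₂ h₂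
    have hterm : ∀ d ∈ Dbig,
        (starRingEnd ℂ) ((1/4 : ℂ) * Complex.exp (2 * (Real.pi : ℂ) * Complex.I *
            (((d.1 * (3*(a₁:ℝ), 3*(b₁:ℝ)).1 + d.2 * (3*(a₁:ℝ), 3*(b₁:ℝ)).2) / 12 : ℝ) : ℂ))) *
          ((1/4 : ℂ) * Complex.exp (2 * (Real.pi : ℂ) * Complex.I *
            (((d.1 * (3*(a₂:ℝ), 3*(b₂:ℝ)).1 + d.2 * (3*(a₂:ℝ), 3*(b₂:ℝ)).2) / 12 : ℝ) : ℂ)))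
          = (1/16 : ℂ) * E (d.1 * (((a₂ - a₁ : ℤ):ℝ)/4) + d.2 * (((b₂ - b₁ : ℤ):ℝ)/4)) := by
      intro d _
      show (starRingEnd ℂ) ((1/4 : ℂ) * E ((d.1 * (3*(a₁:ℝ)) + d.2 * (3*(b₁:ℝ))) / 12)) *
          ((1/4 : ℂ) * E ((d.1 * (3*(a₂:ℝ)) + d.2 * (3*(b₂:ℝ))) / 12)) = _
      rw [map_mul, E_conj, show (starRingEnd ℂ) ((1/4 : ℂ)) = 1/4 by rw [map_div₀, map_one, map_ofNat]]
      rw [show (1/4 : ℂ) * E (-((d.1 * (3*(a₁:ℝ)) + d.2 * (3*(b₁:ℝ))) / 12)) *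
          ((1/4 : ℂ) * E ((d.1 * (3*(a₂:ℝ)) + d.2 * (3*(b₂:ℝ))) / 12)) =
          (1/16 : ℂ) * (E (-((d.1 * (3*(a₁:ℝ)) + d.2 * (3*(b₁:ℝ))) / 12)) *
            E ((d.1 * (3*(a₂:ℝ)) + d.2 * (3*(b₂:ℝ))) / 12)) by ring, ← E_add]
      congr 2
      push_cast
      ring
    rw [Finset.sum_congr rfl hterm, ← Finset.mul_sum, sum_mask]
    by_cases hc : a₁ = a₂ ∧ b₁ = b₂
    · obtain ⟨rfl, rfl⟩ := hc
      rw [if_pos rfl]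
      rw [show ((((a₁ - a₁ : ℤ):ℝ)/4, ((b₁ - b₁ : ℤ):ℝ)/4) : ℝ × ℝ) = ((0:ℝ), (0:ℝ)) by
        rw [Prod.mk.injEq]; constructor <;> push_cast <;> ring]
      rw [mask_Dbig_zero]
      norm_num
    · rw [if_neg (by
        rintro heq
        rw [Prod.mk.injEq] at heq
        obtain ⟨he1, he2⟩ := heq
        have h1 : (a₁:ℝ) = a₂ := by linarith
        have h2 : (b₁:ℝ) = b₂ := by linarith
        exact hc ⟨by exact_mod_cast h1, by exact_mod_cast h2⟩)]
      rw [key_vanish (a₂ - a₁) (b₂ - b₁) (by omega) (by omega) (by omega) (by omega)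
        (by rintro ⟨h1, h2⟩; exact hc ⟨by omega, by omega⟩)]
      ring
  · -- the inclusion
    rintro p ⟨a, b, ha0, ha3, hb0, hb3, hab, rfl⟩
    exact key_vanish a b (by omega) (by omega) (by omega) (by omega)
      (by rintro ⟨rfl, rfl⟩; exact hab rfl)
  · -- the zero set
    ext ⟨x, y⟩
    simp only [Set.mem_setOf_eq, Set.mem_union]
    rw [mask_split, mul_eq_zero, mask_scrD_zero_iff, mask_scrD_zero_iff]
end
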